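/- W is injective on the open cone C = {s ∈ ℂ : s ≠ 0 and the principal argument of −s lies in (0, β)}: for all s, t ∈ C, W(s) = W(t) implies s = t. -/
import Mathlib


/-- The lifted gluing function
`W(s) = −(1/2)(exp((π/β)·Log(−s)) + exp(−(π/β)·Log(−s)))`. -/
noncomputable def Wfun (β : ℝ) (s : ℂ) : ℂ :=
  -(1 / 2) * (Complex.exp (((Real.pi / β : ℝ) : ℂ) * Complex.log (-s)) +
    Complex.exp (-((Real.pi / β : ℝ) : ℂ) * Complex.log (-s)))

lemma cosh_strip_inj {w w' : ℂ} (hw : w.im ∈ Set.Ioo 0 Real.pi)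
    (hw' : w'.im ∈ Set.Ioo 0 Real.pi)
    (h : Complex.exp w + Complex.exp (-w) = Complex.exp w' + Complex.exp (-w')) :
    w = w' := by
  have e1 : Complex.exp (-(w + w')) * Complex.exp w = Complex.exp (-w') := by
    rw [← Complex.exp_add]; ring_nf
  have e2 : Complex.exp (-(w + w')) * Complex.exp w' = Complex.exp (-w) := by
    rw [← Complex.exp_add]; ring_nf
  have key : (Complex.exp w - Complex.exp w') * (1 - Complex.exp (-(w + w'))) = 0 := by
    linear_combination h - e1 + e2
  rcases mul_eq_zero.mp key with h1 | h2
  · have h1' : Complex.exp w = Complex.exp w' := sub_eq_zero.mp h1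
    rw [Complex.exp_eq_exp_iff_exists_int] at h1'
    obtain ⟨n, hn⟩ := h1'
    have him : w.im = w'.im + n * (2 * Real.pi) := by
      have := congrArg Complex.im hn
      simpa [Complex.add_im, Complex.mul_im, Complex.mul_re] using this
    have hn0 : n = 0 := by
      have hpi := Real.pi_pos
      rcases lt_trichotomy n 0 with h | h | h
      · have hn1 : n ≤ -1 := by omega
        have : (n : ℝ) ≤ -1 := by exact_mod_cast hn1
        nlinarith [hw.1, hw.2, hw'.1, hw'.2]
      · exact h
      · have : (1 : ℝ) ≤ n := by exact_mod_cast h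
        nlinarith [hw.1, hw.2, hw'.1, hw'.2]
    rw [hn0] at hn
    simpa using hn
  · have h2' : Complex.exp (-(w + w')) = 1 := (sub_eq_zero.mp h2).symm
    rw [Complex.exp_eq_one_iff] at h2'
    obtain ⟨n, hn⟩ := h2'
    have him : -(w.im + w'.im) = n * (2 * Real.pi) := by
      have := congrArg Complex.im hn
      simpa [Complex.add_im, Complex.neg_im, Complex.mul_im, Complex.mul_re] using this
    exfalso
    have hpi := Real.pi_pos
    rcases lt_trichotomy n 0 with h | h | h
    · have hn1 : n ≤ -1 := by omega
      have : (n : ℝ) ≤ -1 := by exact_mod_cast hn1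
      nlinarith [hw.1, hw.2, hw'.1, hw'.2]
    · rw [h] at him; push_cast at him
      nlinarith [hw.1, hw'.1]
    · have : (1 : ℝ) ≤ n := by exact_mod_cast h
      nlinarith [hw.1, hw.2, hw'.1, hw'.2]

/-- `W` is injective on the open cone `{s ≠ 0 : arg(−s) ∈ (0, β)}`. -/
theorem stmt15 (σ11 σ12 σ22 : ℝ)
    (h11 : 0 < σ11) (h22 : 0 < σ22) (hdet : 0 < σ11 * σ22 - σ12 ^ 2)
    (β : ℝ) (hβ : β = Real.arccos (-σ12 / Real.sqrt (σ11 * σ22))) :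
    ∀ s t : ℂ, s ≠ 0 → Complex.arg (-s) ∈ Set.Ioo 0 β →
      t ≠ 0 → Complex.arg (-t) ∈ Set.Ioo 0 β →
      Wfun β s = Wfun β t → s = t := by
  intro s t hs0 hs ht0 ht hW
  have hβpos : 0 < β := lt_trans hs.1 hs.2
  have hβne : β ≠ 0 := ne_of_gt hβpos
  have hc : (0 : ℝ) < Real.pi / β := div_pos Real.pi_pos hβpos
  set c : ℂ := ((Real.pi / β : ℝ) : ℂ) with hc_def
  have hsum : Complex.exp (c * Complex.log (-s)) + Complex.exp (-(c * Complex.log (-s)))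
      = Complex.exp (c * Complex.log (-t)) + Complex.exp (-(c * Complex.log (-t))) := by
    have := mul_left_cancel₀ (by norm_num : (-(1/2) : ℂ) ≠ 0) hW
    simpa only [neg_mul, ← hc_def] using this
  have him : ∀ u : ℂ, u ≠ 0 → Complex.arg (-u) ∈ Set.Ioo 0 β →
      (c * Complex.log (-u)).im ∈ Set.Ioo 0 Real.pi := by
    intro u hu harg
    have : (c * Complex.log (-u)).im = (Real.pi / β) * Complex.arg (-u) := by
      simp [hc_def, Complex.mul_im, Complex.log_im]
    rw [this]
    constructor
    · exact mul_pos hc harg.1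
    · calc (Real.pi / β) * Complex.arg (-u) < (Real.pi / β) * β :=
            (mul_lt_mul_iff_right₀ hc).mpr harg.2
        _ = Real.pi := div_mul_cancel₀ _ hβne
  have hw := cosh_strip_inj (him s hs0 hs) (him t ht0 ht) hsum
  have hcne : c ≠ 0 := by
    exact Complex.ofReal_ne_zero.mpr (ne_of_gt hc)
  have hlog : Complex.log (-s) = Complex.log (-t) := mul_left_cancel₀ hcne hw
  have : -s = -t := by
    rw [← Complex.exp_log (neg_ne_zero.mpr hs0), hlog,
      Complex.exp_log (neg_ne_zero.mpr ht0)]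
  exact neg_injective this
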